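/- arXiv:2505.19945 — 2 statements merged into one kernel-verified Lean document; each statement's English description precedes it below -/
import Mathlib

section
/- Let G be a connected undirected graph on vertex set V and let p, q : V → R^2 be configurations with p_i ≠ p_j and q_i ≠ q_j for all edges (i,j). If for every edge (i,j) of G there exists θ_ij ∈ [0,2π) with unit bearing b_ij(q) = R(θ_ij) b_ij(p), and for every pair of adjacent edges (j,i), (j,k) the signed angle from b_ji(q) to b_jk(q) equals the signed angle from b_ji(p) to b_jk(p), then there exists a single θ ∈ [0,2π) such that b_ij(q) = R(θ) b_ij(p) for every edge (i,j). -/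
/-!
At a vertex `j`, suppose the bearing of edge `j i` is rotated by `θ` and that of `j k` by `θ'`.
If `α` is the signed angle from `b_ji(p)` to `b_jk(p)`, equality of signed angles gives
`R(θ') R(α) b_ji(p) = R(α) R(θ) b_ji(p)`; since plane rotations commute, `R(θ)` and `R(θ')`
agree on a nonzero vector, so `θ = θ'` as both lie in `[0, 2π)`. Thus the rotation of one edge is
shared by every edge at its endpoints, and by connectivity by every edge of the graph.
-/

open Matrix Real

noncomputable def Rot (θ : ℝ) : Matrix (Fin 2) (Fin 2) ℝ :=
  !![Real.cos θ, -Real.sin θ; Real.sin θ, Real.cos θ]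

noncomputable def Proj (b : Fin 2 → ℝ) : Matrix (Fin 2) (Fin 2) ℝ :=
  1 - Matrix.vecMulVec b b

noncomputable def unitize (x : Fin 2 → ℝ) : Fin 2 → ℝ :=
  (Real.sqrt (x ⬝ᵥ x))⁻¹ • x

noncomputable def signedAngle (a b : Fin 2 → ℝ) : ℝ :=
  if 0 ≤ b ⬝ᵥ (Rot (π/2) *ᵥ a) then Real.arccos (b ⬝ᵥ a)
  else 2*π - Real.arccos (b ⬝ᵥ a)

theorem Rot_mulVec (θ : ℝ) (v : Fin 2 → ℝ) :
    Rot θ *ᵥ v = ![cos θ * v 0 - sin θ * v 1, sin θ * v 0 + cos θ * v 1] := by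
  ext i
  fin_cases i <;> simp [Rot, mulVec, dotProduct, Fin.sum_univ_two, sub_eq_add_neg]

theorem Rot_mul_Rot (θ φ : ℝ) : Rot θ * Rot φ = Rot (θ + φ) := by
  simp only [Rot, mul_fin_two, cos_add, sin_add]
  congr 1
  ring_nf

theorem Rot_mulVec_Rot_mulVec (θ φ : ℝ) (v : Fin 2 → ℝ) :
    Rot θ *ᵥ (Rot φ *ᵥ v) = Rot (θ + φ) *ᵥ v := by
  rw [mulVec_mulVec, Rot_mul_Rot]

theorem Rot_mulVec_dotProduct_self (θ : ℝ) (v : Fin 2 → ℝ) :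
    (Rot θ *ᵥ v) ⬝ᵥ (Rot θ *ᵥ v) = v ⬝ᵥ v := by
  simp only [Rot_mulVec, vec2_dotProduct, cons_val_zero, cons_val_one]
  linear_combination (v 0 ^ 2 + v 1 ^ 2) * sin_sq_add_cos_sq θ

theorem unitize_dotProduct_self {v : Fin 2 → ℝ} (hv : v ≠ 0) :
    unitize v ⬝ᵥ unitize v = 1 := by
  have hpos : 0 < v ⬝ᵥ v :=
    lt_of_le_of_ne (by simpa using dotProduct_star_self_nonneg v)
      (Ne.symm (dotProduct_self_eq_zero.not.mpr hv))
  rw [unitize, smul_dotProduct, dotProduct_smul, smul_eq_mul, smul_eq_mul, ← mul_assoc,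
    ← sq, inv_pow, sq_sqrt hpos.le, inv_mul_cancel₀ hpos.ne']

theorem unitize_neg (v : Fin 2 → ℝ) : unitize (-v) = -unitize v := by
  simp [unitize]

theorem sq_dotProduct_add_sq_dotProduct_Rot_pi_div_two (a b : Fin 2 → ℝ) :
    (b ⬝ᵥ a) ^ 2 + (b ⬝ᵥ (Rot (π / 2) *ᵥ a)) ^ 2 = (a ⬝ᵥ a) * (b ⬝ᵥ b) := by
  simp only [Rot_mulVec, cos_pi_div_two, sin_pi_div_two, vec2_dotProduct, cons_val_zero,
    cons_val_one]
  ring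

section signedAngle

variable {a b : Fin 2 → ℝ}

theorem cos_signedAngle (ha : a ⬝ᵥ a = 1) (hb : b ⬝ᵥ b = 1) :
    cos (signedAngle a b) = b ⬝ᵥ a := by
  have h := sq_dotProduct_add_sq_dotProduct_Rot_pi_div_two a b
  rw [ha, hb, one_mul] at h
  have hc : |b ⬝ᵥ a| ≤ 1 := abs_le_one_iff_mul_self_le_one.mpr (by nlinarith)
  rw [abs_le] at hc
  unfold signedAngle
  split_ifs <;> simp only [cos_two_pi_sub, cos_arccos hc.1 hc.2]

theorem sin_signedAngle (ha : a ⬝ᵥ a = 1) (hb : b ⬝ᵥ b = 1) :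
    sin (signedAngle a b) = b ⬝ᵥ (Rot (π / 2) *ᵥ a) := by
  have h := sq_dotProduct_add_sq_dotProduct_Rot_pi_div_two a b
  rw [ha, hb, one_mul, ← eq_sub_iff_add_eq'] at h
  unfold signedAngle
  split_ifs with hs
  · rw [sin_arccos, ← h, sqrt_sq hs]
  · rw [sin_two_pi_sub, sin_arccos, ← h, sqrt_sq_eq_abs, abs_of_neg (not_le.mp hs), neg_neg]

theorem eq_Rot_signedAngle_mulVec (ha : a ⬝ᵥ a = 1) (hb : b ⬝ᵥ b = 1) :
    b = Rot (signedAngle a b) *ᵥ a := by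
  rw [Rot_mulVec, cos_signedAngle ha hb, sin_signedAngle ha hb]
  simp only [Rot_mulVec, cos_pi_div_two, sin_pi_div_two, vec2_dotProduct] at ha ⊢
  ext i
  fin_cases i <;> simp <;> linear_combination (-b _) * ha

end signedAngle

theorem eq_of_Rot_mulVec_eq {θ φ : ℝ} (hθ : θ ∈ Set.Ico 0 (2 * π)) (hφ : φ ∈ Set.Ico 0 (2 * π))
    {v : Fin 2 → ℝ} (hv : v ≠ 0) (h : Rot θ *ᵥ v = Rot φ *ᵥ v) : θ = φ := by
  have hnorm : v 0 ^ 2 + v 1 ^ 2 ≠ 0 := by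
    simpa [vec2_dotProduct, sq] using dotProduct_self_eq_zero.not.mpr hv
  have h0 := congrFun h 0
  have h1 := congrFun h 1
  simp only [Rot_mulVec, cons_val_zero, cons_val_one] at h0 h1
  have hcos : cos θ = cos φ := mul_right_cancel₀ hnorm (by linear_combination v 0 * h0 + v 1 * h1)
  have hsin : sin θ = sin φ := mul_right_cancel₀ hnorm (by linear_combination v 0 * h1 - v 1 * h0)
  have hθ' : θ ∈ Set.Ico 0 (0 + 2 * π) := by rwa [zero_add]
  have hφ' : φ ∈ Set.Ico 0 (0 + 2 * π) := by rwa [zero_add]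
  have : Fact (0 < 2 * π) := ⟨two_pi_pos⟩
  exact (AddCircle.coe_eq_coe_iff_of_mem_Ico hθ' hφ').mp (Real.Angle.cos_sin_inj hcos hsin)

theorem eq_of_signedAngle_Rot_mulVec_eq {a b : Fin 2 → ℝ} (ha : a ⬝ᵥ a = 1) (hb : b ⬝ᵥ b = 1)
    {θ₁ θ₂ : ℝ} (hθ₁ : θ₁ ∈ Set.Ico 0 (2 * π)) (hθ₂ : θ₂ ∈ Set.Ico 0 (2 * π))
    (h : signedAngle (Rot θ₁ *ᵥ a) (Rot θ₂ *ᵥ b) = signedAngle a b) : θ₁ = θ₂ := by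
  set α := signedAngle a b
  have hab : b = Rot α *ᵥ a := eq_Rot_signedAngle_mulVec ha hb
  have hab' : Rot θ₂ *ᵥ b = Rot α *ᵥ (Rot θ₁ *ᵥ a) := by
    rw [← h]
    exact eq_Rot_signedAngle_mulVec (by rwa [Rot_mulVec_dotProduct_self])
      (by rwa [Rot_mulVec_dotProduct_self])
  have hb0 : b ≠ 0 := by rintro rfl; simp at hb
  refine (eq_of_Rot_mulVec_eq hθ₂ hθ₁ hb0 ?_).symm
  calc Rot θ₂ *ᵥ b = Rot (α + θ₁) *ᵥ a := by rw [hab', Rot_mulVec_Rot_mulVec]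
    _ = Rot θ₁ *ᵥ b := by rw [hab, Rot_mulVec_Rot_mulVec, add_comm]

theorem SimpleGraph.Preconnected.forall_of_adj {V : Type*} {G : SimpleGraph V}
    (hG : G.Preconnected) {P : V → Prop} (hP : ∀ v w, G.Adj v w → P v → P w) {u : V}
    (hu : P u) (v : V) : P v := by
  induction (SimpleGraph.reachable_iff_reflTransGen u v).mp (hG u v) with
  | refl => exact hu
  | tail _ hadj ih => exact hP _ _ hadj ih

section Bearings

variable {V : Type*} (p q : V → Fin 2 → ℝ)

def RotatesBearing (θ : ℝ) (i j : V) : Prop :=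
  unitize (q j - q i) = Rot θ *ᵥ unitize (p j - p i)

variable {p q}

theorem RotatesBearing.symm {θ : ℝ} {i j : V} (h : RotatesBearing p q θ i j) :
    RotatesBearing p q θ j i := by
  rw [RotatesBearing, ← neg_sub, unitize_neg, h, ← neg_sub (p j), unitize_neg, mulVec_neg]

theorem RotatesBearing.of_signedAngle_eq {θ θ' : ℝ} (hθ : θ ∈ Set.Ico 0 (2 * π))
    (hθ' : θ' ∈ Set.Ico 0 (2 * π)) {i j k : V} (hij : p i ≠ p j) (hkj : p k ≠ p j)
    (hji : RotatesBearing p q θ j i) (hjk : RotatesBearing p q θ' j k)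
    (hang : signedAngle (unitize (q i - q j)) (unitize (q k - q j)) =
      signedAngle (unitize (p i - p j)) (unitize (p k - p j))) :
    RotatesBearing p q θ j k := by
  unfold RotatesBearing at hji hjk ⊢
  rw [hji, hjk] at hang
  rwa [eq_of_signedAngle_Rot_mulVec_eq (unitize_dotProduct_self (sub_ne_zero.mpr hij))
    (unitize_dotProduct_self (sub_ne_zero.mpr hkj)) hθ hθ' hang]

end Bearings

theorem connected_graph_common_rotation_general {V : Type*} (G : SimpleGraph V) (hG : G.Connected)
    (p q : V → Fin 2 → ℝ)
    (hp : ∀ i j, G.Adj i j → p i ≠ p j)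
    (hrot : ∀ i j, G.Adj i j → ∃ θ ∈ Set.Ico (0:ℝ) (2*π),
      unitize (q j - q i) = Rot θ *ᵥ unitize (p j - p i))
    (hang : ∀ i j k, G.Adj j i → G.Adj j k →
      signedAngle (unitize (q i - q j)) (unitize (q k - q j)) =
      signedAngle (unitize (p i - p j)) (unitize (p k - p j))) :
    ∃ θ ∈ Set.Ico (0:ℝ) (2*π), ∀ i j, G.Adj i j →
      unitize (q j - q i) = Rot θ *ᵥ unitize (p j - p i) := by
  by_cases hE : ∃ i j, G.Adj i j
  swap
  · exact ⟨0, ⟨le_rfl, two_pi_pos⟩, fun i j hij => (hE ⟨i, j, hij⟩).elim⟩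
  obtain ⟨i₀, j₀, h₀⟩ := hE
  obtain ⟨θ, hθ, hθ₀⟩ := hrot i₀ j₀ h₀
  refine ⟨θ, hθ, ?_⟩
  have at_vertex : ∀ i j, G.Adj j i → RotatesBearing p q θ j i →
      ∀ k, G.Adj j k → RotatesBearing p q θ j k := by
    intro i j hji hθji k hjk
    obtain ⟨θ', hθ', hθjk⟩ := hrot j k hjk
    exact .of_signedAngle_eq hθ hθ' (hp j i hji).symm (hp j k hjk).symm hθji hθjk
      (hang i j k hji hjk)
  have propagate : ∀ v w, G.Adj v w → (∀ k, G.Adj v k → RotatesBearing p q θ v k) →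
      ∀ k, G.Adj w k → RotatesBearing p q θ w k :=
    fun v w hvw hv => at_vertex v w hvw.symm (RotatesBearing.symm (hv w hvw))
  exact hG.preconnected.forall_of_adj propagate (at_vertex j₀ i₀ h₀ hθ₀)

theorem connected_graph_common_rotation {V : Type*} (G : SimpleGraph V) (hG : G.Connected)
    (p q : V → Fin 2 → ℝ)
    (hp : ∀ i j, G.Adj i j → p i ≠ p j) (hq : ∀ i j, G.Adj i j → q i ≠ q j)
    (hrot : ∀ i j, G.Adj i j → ∃ θ ∈ Set.Ico (0:ℝ) (2*π),
      unitize (q j - q i) = Rot θ *ᵥ unitize (p j - p i))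
    (hang : ∀ i j k, G.Adj j i → G.Adj j k →
      signedAngle (unitize (q i - q j)) (unitize (q k - q j)) =
      signedAngle (unitize (p i - p j)) (unitize (p k - p j))) :
    ∃ θ ∈ Set.Ico (0:ℝ) (2*π), ∀ i j, G.Adj i j →
      unitize (q j - q i) = Rot θ *ᵥ unitize (p j - p i) :=
  connected_graph_common_rotation_general G hG p q hp hrot hang
end

section
/- Let p ∈ (R^2)^n with n ≥ 1 and fix index 1. Define q_i = R(π/2) p_i + η where η = (I_2 − R(π/2)) p_1. Then q_1 = p_1 and q differs from p whenever there exists i with p_i ≠ p_1; moreover q is obtained from p by a rigid rotation composed with a translation, so all pairwise bearings of q are the common rotation R(π/2) of the bearings of p. -/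
open Matrix Real

lemma rot_apply (v : Fin 2 → ℝ) : Rot (π/2) *ᵥ v = ![-(v 1), v 0] := by
  funext k
  fin_cases k <;>
    simp [Rot, Matrix.mulVec, dotProduct, Fin.sum_univ_two]

theorem one_anchor_insufficient (n : ℕ) (hn : 0 < n) (p q : Fin n → Fin 2 → ℝ)
    (hq : ∀ i, q i = Rot (π/2) *ᵥ p i + (p ⟨0, hn⟩ - Rot (π/2) *ᵥ p ⟨0, hn⟩)) :
    q ⟨0, hn⟩ = p ⟨0, hn⟩ ∧
    ((∃ i, p i ≠ p ⟨0, hn⟩) → q ≠ p) ∧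
    (∀ i j, p i ≠ p j → unitize (q j - q i) = Rot (π/2) *ᵥ unitize (p j - p i)) := by
  refine ⟨?_, ?_, ?_⟩
  · rw [hq]; abel
  · rintro ⟨i, hi⟩ heq
    apply hi
    have h := hq i
    rw [heq] at h
    have hv : p i - p ⟨0, hn⟩ = Rot (π/2) *ᵥ (p i - p ⟨0, hn⟩) := by
      rw [Matrix.mulVec_sub]
      nth_rewrite 1 [h]
      abel
    rw [rot_apply] at hv
    have h0 := congrFun hv 0
    have h1 := congrFun hv 1
    simp [Pi.sub_apply] at h0 h1
    have e0 : p i 0 = p ⟨0, hn⟩ 0 := by linarith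
    have e1 : p i 1 = p ⟨0, hn⟩ 1 := by linarith
    funext k
    fin_cases k <;> assumption
  · intro i j hij
    have hd : q j - q i = Rot (π/2) *ᵥ (p j - p i) := by
      rw [hq, hq, Matrix.mulVec_sub]
      abel
    have hnorm : (Rot (π/2) *ᵥ (p j - p i)) ⬝ᵥ (Rot (π/2) *ᵥ (p j - p i))
        = (p j - p i) ⬝ᵥ (p j - p i) := by
      rw [rot_apply]
      simp [dotProduct, Fin.sum_univ_two]
      ring
    unfold unitize
    rw [hd, hnorm, Matrix.mulVec_smul]
end
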